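/- arXiv:1112.0791 — 3 statements merged into one kernel-verified Lean document; each statement's English description precedes it below -/
import Mathlib

section
/- For all simple ASO problems P and Q, the following conditions are equivalent: (a) P ≡^s_g Q; (b) P ≡^{s,=1}_g Q; (c) HT(P^g) = HT(Q^g) and (≥^P)_{Mod(P^g)} = (≥^Q)_{Mod(Q^g)}. -/
open scoped Classical

/-- Propositional formulas over a universe `U` of atoms, built from atoms,
`⊥`, conjunction, disjunction and implication. -/
inductive Formula (U : Type) : Type where
  | atom : U → Formula U
  | bot  : Formula U
  | conj : Formula U → Formula U → Formula U
  | disj : Formula U → Formula U → Formula U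
  | imp  : Formula U → Formula U → Formula U

variable {U : Type}

/-- Classical satisfaction `I ⊨ φ`. -/
def Sat (I : Set U) : Formula U → Prop
  | .atom a => a ∈ I
  | .bot => False
  | .conj φ ψ => Sat I φ ∧ Sat I ψ
  | .disj φ ψ => Sat I φ ∨ Sat I ψ
  | .imp φ ψ => Sat I φ → Sat I ψ

/-- Classical satisfaction of a theory. -/
def SatTheory (I : Set U) (T : Set (Formula U)) : Prop := ∀ φ ∈ T, Sat I φ

/-- `Mod T`: the classical models of a theory `T`. -/
def models (T : Set (Formula U)) : Set (Set U) := {I | SatTheory I T}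

/-- HT-satisfaction `⟨I, J⟩ ⊨_HT φ` (for `I ⊆ J`). -/
def SatHT (I J : Set U) : Formula U → Prop
  | .atom a => a ∈ I
  | .bot => False
  | .conj φ ψ => SatHT I J φ ∧ SatHT I J ψ
  | .disj φ ψ => SatHT I J φ ∨ SatHT I J ψ
  | .imp φ ψ => Sat J (Formula.imp φ ψ) ∧ (¬ SatHT I J φ ∨ SatHT I J ψ)

/-- HT-satisfaction of a theory. -/
def SatHTTheory (I J : Set U) (T : Set (Formula U)) : Prop := ∀ φ ∈ T, SatHT I J φ

/-- `HT T`: the set of HT-models `⟨I,J⟩` (with `I ⊆ J`) of a theory `T`. -/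
def HTmod (T : Set (Formula U)) : Set (Set U × Set U) :=
  {p | p.1 ⊆ p.2 ∧ SatHTTheory p.1 p.2 T}

/-- `AS T`: the equilibrium models (answer sets) of a theory `T`. -/
def AS (T : Set (Formula U)) : Set (Set U) :=
  {I | SatHTTheory I I T ∧ ∀ J : Set U, J ⊂ I → ¬ SatHTTheory J I T}

/-- A ranked preference rule `φ₁ > ⋯ > φₖ ←ʲ ψ` with nonempty head and rank `j ≥ 1`. -/
structure Rule (U : Type) : Type where
  head : List (Formula U)
  body : Formula U
  rank : ℕ
  head_ne : head ≠ []
  rank_pos : 1 ≤ rank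

/-- Satisfaction degree `v_I(r)`: the least (1-based) index of a satisfied head formula
if `I` satisfies the body and some head formula; `1` otherwise. -/
noncomputable def degree (I : Set U) (r : Rule U) : ℕ :=
  if Sat I r.body ∧ ∃ φ ∈ r.head, Sat I φ then
    sInf {n : ℕ | ∃ k : Fin r.head.length, n = k.1 + 1 ∧ Sat I (r.head.get k)}
  else 1

/-- The strict preference `I >^S J` induced by a selector `S`. -/
def gtSel (S : Set (Rule U)) (I J : Set U) : Prop :=
  ∃ r' ∈ S, degree I r' < degree J r' ∧
    (∀ r ∈ S, r.rank = r'.rank → degree I r ≤ degree J r) ∧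
    (∀ r ∈ S, r.rank < r'.rank → degree I r = degree J r)

/-- The indifference `I ≈^S J` induced by a selector `S`. -/
def simSel (S : Set (Rule U)) (I J : Set U) : Prop :=
  ∀ r ∈ S, degree I r = degree J r

/-- The preference `I ≥^S J` induced by a selector `S`. -/
def geSel (S : Set (Rule U)) (I J : Set U) : Prop :=
  simSel S I J ∨ gtSel S I J

/-- An optimization problem: a generator theory plus a finite selector. -/
structure OptProblem (U : Type) : Type where
  gen : Set (Formula U)
  sel : Set (Rule U)
  sel_finite : sel.Finite

/-- Union of optimization problems. -/
def OptProblem.union (P Q : OptProblem U) : OptProblem U :=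
  ⟨P.gen ∪ Q.gen, P.sel ∪ Q.sel, P.sel_finite.union Q.sel_finite⟩

/-- `P_{<i}`: the restriction of `P` to preference rules of rank `< i`. -/
def OptProblem.below (P : OptProblem U) (i : ℕ) : OptProblem U :=
  ⟨P.gen, {r ∈ P.sel | r.rank < i}, P.sel_finite.subset (Set.sep_subset _ _)⟩

/-- The two semantics for generators: classical (CO problems) and
equilibrium-model/answer-set (ASO problems). -/
inductive Sem : Type where
  | co : Sem
  | aso : Sem

/-- `μ(P)`: the outcomes of `P` under the chosen semantics. -/
def outcomes (sem : Sem) (P : OptProblem U) : Set (Set U) :=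
  match sem with
  | Sem.co => models P.gen
  | Sem.aso => AS P.gen

/-- `π(P)`: the preferred (optimal) outcomes of `P`. -/
def pref (sem : Sem) (P : OptProblem U) : Set (Set U) :=
  {I | I ∈ outcomes sem P ∧ ¬ ∃ J ∈ outcomes sem P, gtSel P.sel J I}

/-- `diff^P(I,J)`: the largest `k` with `I ≈^{P_{<k}} J` (`∞` if this holds for all `k`). -/
noncomputable def diff (P : OptProblem U) (I J : Set U) : ℕ∞ :=
  if ∀ k : ℕ, simSel (P.below k).sel I J then ⊤
  else ((sSup {k : ℕ | simSel (P.below k).sel I J} : ℕ) : ℕ∞)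

/-- Restriction `≻_V` of a relation on interpretations to a set `V` of interpretations. -/
def restrictRel (rel : Set U → Set U → Prop) (V : Set (Set U)) : Set U → Set U → Prop :=
  fun A B => rel A B ∧ A ∈ V ∧ B ∈ V

/-- All rules of `S` have rank in the interval `[i,j]` (`j` may be `∞`). -/
def inRankInterval (i : ℕ) (j : ℕ∞) (S : Set (Rule U)) : Prop :=
  ∀ r ∈ S, i ≤ r.rank ∧ (r.rank : ℕ∞) ≤ j

/-- Strong sel-equivalence `P ≡^{s,[i,j]} Q`: same preferred outcomes under addition of any
context from `L^{s,[i,j]}` (empty generator, selector with ranks in `[i,j]`). -/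
def seqv (sem : Sem) (i : ℕ) (j : ℕ∞) (P Q : OptProblem U) : Prop :=
  ∀ R : OptProblem U, R.gen = ∅ → inRankInterval i j R.sel →
    pref sem (P.union R) = pref sem (Q.union R)

/-- Strong gen-equivalence `P ≡_g Q`: same preferred outcomes under addition of any
generator context from `L^g` (empty selector). -/
def geqv (sem : Sem) (P Q : OptProblem U) : Prop :=
  ∀ R : OptProblem U, R.sel = ∅ →
    pref sem (P.union R) = pref sem (Q.union R)

/-- Strong (combined) equivalence `P ≡^{s,[i,j]}_g Q`: same preferred outcomes under addition
of any context from `L^{[i,j]}` (arbitrary generator, selector with ranks in `[i,j]`). -/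
def sgeqv (sem : Sem) (i : ℕ) (j : ℕ∞) (P Q : OptProblem U) : Prop :=
  ∀ R : OptProblem U, inRankInterval i j R.sel →
    pref sem (P.union R) = pref sem (Q.union R)


/-!
(a) ⇒ (b) is immediate. For (b) ⇒ (c), contexts with empty selector whose only possible answer
set is `J` detect whether `⟨I, J⟩` is an HT-model, as in the characterisation of strong
equivalence of theories; and a context whose answer sets are exactly two models `I ≠ J`, joined
by a simple rule preferring `I` to `J`, makes `J` preferred for `Q` but not for `P` whenever
`I ≥^P J` but not `I ≥^Q J`. For (c) ⇒ (a), equal HT-models give equal answer sets in every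
context, and for a simple selector `S` the relation `≥^S` is Pareto dominance, through which
alone `S` enters the strict preference of `S ∪ R`.
-/

namespace Formula

def neg (φ : Formula U) : Formula U := φ.imp .bot

end Formula

section HereAndThere

variable {I J K : Set U} {A B G T : Set (Formula U)}

theorem satHT_self (I : Set U) : ∀ φ : Formula U, SatHT I I φ ↔ Sat I φ
  | .atom _ | .bot => Iff.rfl
  | .conj φ ψ => and_congr (satHT_self I φ) (satHT_self I ψ)
  | .disj φ ψ => or_congr (satHT_self I φ) (satHT_self I ψ)
  | .imp φ ψ => by
      simp only [SatHT, Sat, satHT_self I φ, satHT_self I ψ]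
      tauto

theorem sat_of_satHT (hIJ : I ⊆ J) : ∀ {φ : Formula U}, SatHT I J φ → Sat J φ
  | .atom _, h => hIJ h
  | .conj _ _, h => ⟨sat_of_satHT hIJ h.1, sat_of_satHT hIJ h.2⟩
  | .disj _ _, h => h.imp (sat_of_satHT hIJ) (sat_of_satHT hIJ)
  | .imp _ _, h => h.1

theorem satHT_neg (hKJ : K ⊆ J) {φ : Formula U} : SatHT K J φ.neg ↔ ¬ Sat J φ :=
  ⟨fun h => h.1, fun h => ⟨h, Or.inl fun h' => h (sat_of_satHT hKJ h')⟩⟩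

theorem satTheory_union : SatTheory I (A ∪ B) ↔ SatTheory I A ∧ SatTheory I B := by
  simp only [SatTheory, Set.mem_union, or_imp, forall_and]

theorem satHTTheory_union : SatHTTheory I J (A ∪ B) ↔ SatHTTheory I J A ∧ SatHTTheory I J B := by
  simp only [SatHTTheory, Set.mem_union, or_imp, forall_and]

theorem satHTTheory_self : SatHTTheory I I T ↔ SatTheory I T :=
  forall₂_congr fun φ _ => satHT_self I φ

theorem satTheory_of_satHTTheory (hIJ : I ⊆ J) (h : SatHTTheory I J T) : SatTheory J T :=
  fun φ hφ => sat_of_satHT hIJ (h φ hφ)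

theorem mem_AS_iff : I ∈ AS T ↔ SatTheory I T ∧ ∀ K ⊂ I, ¬ SatHTTheory K I T := by
  rw [AS, Set.mem_ofPred_eq, satHTTheory_self]

theorem AS_subset_models : AS T ⊆ models T :=
  fun _ hI => (mem_AS_iff.mp hI).1

theorem mem_HTmod_iff (hIJ : I ⊆ J) : (I, J) ∈ HTmod T ↔ SatHTTheory I J T :=
  and_iff_right hIJ

theorem models_eq_of_HTmod_eq (h : HTmod A = HTmod B) : models A = models B := by
  ext K
  simpa only [models, Set.mem_ofPred_eq, mem_HTmod_iff subset_rfl, satHTTheory_self]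
    using Set.ext_iff.mp h (K, K)

theorem AS_union_eq_of_HTmod_eq (h : HTmod A = HTmod B) (G : Set (Formula U)) :
    AS (A ∪ G) = AS (B ∪ G) := by
  have key : ∀ {K I : Set U}, K ⊆ I → (SatHTTheory K I A ↔ SatHTTheory K I B) := fun hKI => by
    rw [← mem_HTmod_iff hKI, ← mem_HTmod_iff hKI, h]
  ext I
  simp only [AS, Set.mem_ofPred_eq, satHTTheory_union, key subset_rfl]
  exact and_congr_right fun _ => forall₂_congr fun K hK => by rw [key hK.subset]

end HereAndThere

section SimpleSelectors

variable {S S' R : Set (Rule U)} {I J : Set U}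

def IsSimpleSel (S : Set (Rule U)) : Prop := ∀ r ∈ S, r.rank = 1

def paretoSel (S : Set (Rule U)) (I J : Set U) : Prop := ∀ r ∈ S, degree I r ≤ degree J r

theorem gtSel_irrefl (S : Set (Rule U)) (I : Set U) : ¬ gtSel S I I :=
  fun ⟨_, _, h, _⟩ => h.false

theorem simSel.not_gtSel (h : simSel S I J) : ¬ gtSel S I J :=
  fun ⟨r, hr, hlt, _⟩ => hlt.ne (h r hr)

theorem simSel_iff_paretoSel : simSel S I J ↔ paretoSel S I J ∧ paretoSel S J I :=
  ⟨fun h => ⟨fun r hr => (h r hr).le, fun r hr => (h r hr).ge⟩,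
    fun h r hr => (h.1 r hr).antisymm (h.2 r hr)⟩

theorem paretoSel_union : paretoSel (S ∪ R) I J ↔ paretoSel S I J ∧ paretoSel R I J := by
  simp only [paretoSel, Set.mem_union, or_imp, forall_and]

theorem IsSimpleSel.union (hS : IsSimpleSel S) (hR : IsSimpleSel R) : IsSimpleSel (S ∪ R) :=
  fun r hr => hr.elim (hS r) (hR r)

theorem IsSimpleSel.gtSel_iff (hS : IsSimpleSel S) :
    gtSel S I J ↔ paretoSel S I J ∧ ¬ simSel S I J := by
  constructor
  · intro hgt
    obtain ⟨r', hr', -, hle, -⟩ := id hgt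
    exact ⟨fun r hr => hle r hr ((hS r hr).trans (hS r' hr').symm), fun h => h.not_gtSel hgt⟩
  · rintro ⟨hle, hsim⟩
    obtain ⟨r', hr', hne⟩ := not_forall₂.mp hsim
    refine ⟨r', hr', (hle r' hr').lt_of_ne hne, fun r hr _ => hle r hr, fun r hr hlt => ?_⟩
    rw [hS r hr, hS r' hr'] at hlt
    exact absurd hlt (lt_irrefl 1)

theorem IsSimpleSel.geSel_iff (hS : IsSimpleSel S) : geSel S I J ↔ paretoSel S I J := by
  rw [geSel, hS.gtSel_iff, simSel_iff_paretoSel]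
  tauto

theorem gtSel_union_iff_of_simSel (h : simSel S I J) : gtSel (S ∪ R) I J ↔ gtSel R I J := by
  constructor
  · rintro ⟨r', hr', hlt, hle, heq⟩
    have hr'R : r' ∈ R := hr'.resolve_left fun hr'S => hlt.ne (h r' hr'S)
    exact ⟨r', hr'R, hlt, fun r hr => hle r (.inr hr), fun r hr => heq r (.inr hr)⟩
  · rintro ⟨r', hr', hlt, hle, heq⟩
    refine ⟨r', .inr hr', hlt, ?_, ?_⟩
    · rintro r (hr | hr)
      exacts [fun _ => (h r hr).le, hle r hr]
    · rintro r (hr | hr)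
      exacts [fun _ => h r hr, heq r hr]

theorem IsSimpleSel.gtSel_union_iff_of_not_simSel (hS : IsSimpleSel S) (h : ¬ simSel S I J) :
    gtSel (S ∪ R) I J ↔ paretoSel S I J ∧ ∀ r ∈ R, r.rank = 1 → degree I r ≤ degree J r := by
  constructor
  · rintro ⟨r', hr', hlt, hle, heq⟩
    have hr'1 : r'.rank = 1 := by
      by_contra hne
      have h1 : 1 < r'.rank := r'.rank_pos.lt_of_ne (Ne.symm hne)
      exact h fun r hr => heq r (.inl hr) ((hS r hr).trans_lt h1)
    exact ⟨fun r hr => hle r (.inl hr) ((hS r hr).trans hr'1.symm),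
      fun r hr hr1 => hle r (.inr hr) (hr1.trans hr'1.symm)⟩
  · rintro ⟨hleS, hleR⟩
    obtain ⟨r', hr', hne⟩ := not_forall₂.mp h
    refine ⟨r', .inl hr', (hleS r' hr').lt_of_ne hne, ?_, fun r _ hlt => ?_⟩
    · rintro r (hr | hr) hrank
      exacts [hleS r hr, hleR r hr (hrank.trans (hS r' hr'))]
    · rw [hS r' hr'] at hlt
      exact absurd r.rank_pos (not_le.mpr hlt)

theorem IsSimpleSel.gtSel_union_congr (hS : IsSimpleSel S) (hS' : IsSimpleSel S')
    (hIJ : geSel S I J ↔ geSel S' I J) (hJI : geSel S J I ↔ geSel S' J I) :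
    gtSel (S ∪ R) I J ↔ gtSel (S' ∪ R) I J := by
  rw [hS.geSel_iff, hS'.geSel_iff] at hIJ hJI
  have hsim : simSel S I J ↔ simSel S' I J := by
    rw [simSel_iff_paretoSel, simSel_iff_paretoSel, hIJ, hJI]
  by_cases h : simSel S I J
  · rw [gtSel_union_iff_of_simSel h, gtSel_union_iff_of_simSel (hsim.mp h)]
  · rw [hS.gtSel_union_iff_of_not_simSel h, hS'.gtSel_union_iff_of_not_simSel (hsim.not.mp h),
      hIJ]

end SimpleSelectors

section Contexts

variable {I J K L : Set U} {G : Set (Formula U)}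

def htContext (I J : Set U) : Set (Formula U) :=
  Formula.atom '' I ∪ {φ | ∃ p ∈ J \ I, ∃ q ∈ J \ I, φ = (Formula.atom p).imp (.atom q)} ∪
    (fun a => (Formula.atom a).neg.neg) '' J ∪ (fun a => (Formula.atom a).neg) '' Jᶜ

theorem eq_of_satTheory_htContext (h : SatTheory L (htContext I J)) : L = J := by
  ext a
  refine ⟨fun haL => ?_, fun haJ => ?_⟩
  · by_contra haJ
    exact h _ (.inr ⟨a, haJ, rfl⟩) haL
  · by_contra haL
    exact h _ (.inl (.inr ⟨a, haJ, rfl⟩)) haL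

theorem satTheory_htContext (hIJ : I ⊆ J) : SatTheory J (htContext I J) := by
  rintro φ (((⟨a, ha, rfl⟩ | ⟨p, -, q, hq, rfl⟩) | ⟨a, ha, rfl⟩) | ⟨a, ha, rfl⟩)
  exacts [hIJ ha, fun _ => hq.1, fun h => h ha, ha]

theorem satHTTheory_htContext (hIJ : I ⊆ J) : SatHTTheory I J (htContext I J) := by
  rintro φ (((⟨a, ha, rfl⟩ | ⟨p, hp, q, hq, rfl⟩) | ⟨a, ha, rfl⟩) | ⟨a, ha, rfl⟩)
  · exact ha
  · exact ⟨fun _ => hq.1, .inl hp.2⟩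
  · exact (satHT_neg hIJ).mpr fun h => h ha
  · exact (satHT_neg hIJ).mpr ha

/-- If `p ∈ K \ I`, any `q ∈ J \ K` violates `p → q` at `⟨K, J⟩`. -/
theorem eq_of_satHTTheory_htContext (hK : K ⊂ J) (h : SatHTTheory K J (htContext I J)) :
    K = I := by
  have hIK : I ⊆ K := fun a ha => h _ (.inl (.inl (.inl ⟨a, ha, rfl⟩)))
  obtain ⟨q, hqJ, hqK⟩ := Set.exists_of_ssubset hK
  refine Set.Subset.antisymm (fun p hpK => ?_) hIK
  by_contra hpI
  have hq : q ∈ J \ I := ⟨hqJ, fun hqI => hqK (hIK hqI)⟩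
  obtain ⟨-, hnp | hq'⟩ := h _ (.inl (.inl (.inr ⟨p, ⟨hK.subset hpK, hpI⟩, q, hq, rfl⟩)))
  exacts [hnp hpK, hqK hq']

theorem AS_union_htContext_subset : AS (G ∪ htContext I J) ⊆ {J} :=
  fun _ hL => eq_of_satTheory_htContext (satTheory_union.mp (AS_subset_models hL)).2

theorem mem_AS_union_htContext_iff (hIJ : I ⊆ J) :
    J ∈ AS (G ∪ htContext I J) ↔ SatTheory J G ∧ (I ⊂ J → ¬ SatHTTheory I J G) := by
  simp only [mem_AS_iff, satTheory_union, satHTTheory_union, satTheory_htContext hIJ, and_true]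
  refine and_congr_right fun _ => ⟨fun h hI hG => h I hI ⟨hG, satHTTheory_htContext hIJ⟩, ?_⟩
  rintro h K hK ⟨hG, hctx⟩
  obtain rfl := eq_of_satHTTheory_htContext hK hctx
  exact h hK hG

theorem HTmod_subset_of_AS_union_htContext {A B : Set (Formula U)}
    (h : ∀ I J : Set U, I ⊆ J → AS (A ∪ htContext I J) = AS (B ∪ htContext I J)) :
    HTmod A ⊆ HTmod B := by
  rintro ⟨I, J⟩ ⟨hIJ : I ⊆ J, hA : SatHTTheory I J A⟩
  have hJA : SatTheory J A := satTheory_of_satHTTheory hIJ hA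
  have hJB : SatTheory J B := by
    have hJ : J ∈ AS (A ∪ htContext J J) :=
      (mem_AS_union_htContext_iff subset_rfl).mpr ⟨hJA, fun h => absurd h (ssubset_irrefl J)⟩
    rw [h J J subset_rfl, mem_AS_union_htContext_iff subset_rfl] at hJ
    exact hJ.1
  refine ⟨hIJ, by_contra fun hB => ?_⟩
  have hJ : J ∈ AS (B ∪ htContext I J) :=
    (mem_AS_union_htContext_iff hIJ).mpr ⟨hJB, fun _ => hB⟩
  rw [← h I J hIJ, mem_AS_union_htContext_iff hIJ] at hJ
  rcases hIJ.ssubset_or_eq with hss | rfl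
  · exact hJ.2 hss hA
  · exact hB (satHTTheory_self.mpr hJB)

def guarded (φ : Formula U) (K : Set U) : Set (Formula U) :=
  (fun a => φ.imp (.atom a)) '' K ∪ (fun a => φ.imp (Formula.atom a).neg) '' Kᶜ

theorem satTheory_guarded {φ : Formula U} : SatTheory L (guarded φ K) ↔ (Sat L φ → L = K) := by
  constructor
  · intro h hφ
    ext a
    refine ⟨fun haL => by_contra fun haK => h _ (.inr ⟨a, haK, rfl⟩) hφ haL,
      fun haK => h _ (.inl ⟨a, haK, rfl⟩) hφ⟩
  · rintro h _ (⟨a, ha, rfl⟩ | ⟨a, ha, rfl⟩) hφ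
    all_goals obtain rfl := h hφ
    exacts [ha, ha]

theorem subset_of_satHTTheory_guarded {φ : Formula U} (h : SatHTTheory L J (guarded φ K))
    (hφ : SatHT L J φ) : K ⊆ L :=
  fun a ha => (h _ (.inl ⟨a, ha, rfl⟩)).2.resolve_left (not_not.mpr hφ)

theorem mem_AS_of_guarded {φ : Formula U} {T : Set (Formula U)} (hT : guarded φ J ⊆ T)
    (hJ : SatTheory J T) (hφ : ∀ K ⊆ J, SatHT K J φ) : J ∈ AS T :=
  mem_AS_iff.mpr ⟨hJ, fun K hK hKT => hK.not_subset
    (subset_of_satHTTheory_guarded (fun ψ hψ => hKT ψ (hT hψ)) (hφ K hK.subset))⟩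

/-- The guard of `I` is `¬¬c` rather than `c`: `¬¬c` holds at every `⟨K, I⟩`, which keeps `I`
minimal. -/
def pairContext (c : U) (I J : Set U) : Set (Formula U) :=
  guarded (Formula.atom c).neg.neg I ∪ guarded (Formula.atom c).neg J

theorem AS_union_pairContext {c : U} (hcI : c ∈ I) (hcJ : c ∉ J) (hI : SatTheory I G)
    (hJ : SatTheory J G) : AS (G ∪ pairContext c I J) = {I, J} := by
  have hmod : ∀ L, SatTheory L (pairContext c I J) ↔ (c ∈ L → L = I) ∧ (c ∉ L → L = J) := by
    intro L
    simp only [pairContext, satTheory_union, satTheory_guarded, Formula.neg, Sat, imp_false,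
      not_not]
  ext L
  constructor
  · intro hL
    have hLc := (hmod L).mp (satTheory_union.mp (AS_subset_models hL)).2
    by_cases hc : c ∈ L
    exacts [.inl (hLc.1 hc), .inr (hLc.2 hc)]
  · rintro (rfl | rfl)
    · refine mem_AS_of_guarded (Set.subset_union_left.trans Set.subset_union_right)
        (satTheory_union.mpr ⟨hI, (hmod L).mpr ⟨fun _ => rfl, fun h => absurd hcI h⟩⟩)
        fun K hK => (satHT_neg hK).mpr fun h => h hcI
    · refine mem_AS_of_guarded (Set.subset_union_right.trans Set.subset_union_right)
        (satTheory_union.mpr ⟨hJ, (hmod L).mpr ⟨fun h => absurd h hcJ, fun _ => rfl⟩⟩)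
        fun K hK => (satHT_neg hK).mpr hcJ

theorem exists_AS_union_eq_pair (h : I ≠ J) :
    ∃ T : Set (Formula U), ∀ G, SatTheory I G → SatTheory J G → AS (G ∪ T) = {I, J} := by
  obtain ⟨c, ⟨hcI, hcJ⟩ | ⟨hcJ, hcI⟩⟩ := Set.symmDiff_nonempty.mpr h
  · exact ⟨pairContext c I J, fun G hI hJ => AS_union_pairContext hcI hcJ hI hJ⟩
  · exact ⟨pairContext c J I, fun G hI hJ => (AS_union_pairContext hcJ hcI hJ hI).trans
      (Set.pair_comm J I)⟩

end Contexts

section Rules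

variable {I J : Set U}

def preferRule (φ : Formula U) : Rule U :=
  ⟨[φ, φ.neg], φ.disj φ.neg, 1, List.cons_ne_nil _ _, le_rfl⟩

theorem degree_preferRule (φ : Formula U) :
    degree I (preferRule φ) = if Sat I φ then 1 else 2 := by
  by_cases h : Sat I φ <;> simp [degree, preferRule, Formula.neg, Sat, h, Fin.exists_fin_two]

theorem exists_rule_degree_lt (h : I ≠ J) :
    ∃ r : Rule U, r.rank = 1 ∧ degree I r < degree J r := by
  obtain ⟨a, ⟨haI, haJ⟩ | ⟨haJ, haI⟩⟩ := Set.symmDiff_nonempty.mpr h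
  · refine ⟨preferRule (.atom a), rfl, ?_⟩
    simp [degree_preferRule, Sat, haI, haJ]
  · refine ⟨preferRule (Formula.atom a).neg, rfl, ?_⟩
    simp [degree_preferRule, Formula.neg, Sat, haI, haJ]

end Rules

section Preferences

variable {sem : Sem} {P Q : OptProblem U}

theorem pref_eq_outcomes_of_subsingleton (h : (outcomes sem P).Subsingleton) :
    pref sem P = outcomes sem P :=
  Set.sep_eq_self_iff_mem_true.mpr fun I hI ⟨_, hJ, hgt⟩ =>
    gtSel_irrefl P.sel I (h hJ hI ▸ hgt)

theorem pref_congr (hout : outcomes sem P = outcomes sem Q)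
    (hgt : ∀ A ∈ outcomes sem P, ∀ B ∈ outcomes sem P, gtSel P.sel A B ↔ gtSel Q.sel A B) :
    pref sem P = pref sem Q := by
  ext I
  simp only [pref, Set.mem_ofPred_eq, ← hout]
  exact and_congr_right fun hI => not_congr <| exists_congr fun J =>
    and_congr_right fun hJ => hgt J hJ I hI

theorem restrictRel_eq_iff {r r' : Set U → Set U → Prop} {V : Set (Set U)} :
    restrictRel r V = restrictRel r' V ↔ ∀ A ∈ V, ∀ B ∈ V, (r A B ↔ r' A B) := by
  simp only [funext_iff, restrictRel, eq_iff_iff]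
  exact ⟨fun h A hA B hB => by simpa [hA, hB] using h A B,
    fun h A B => ⟨fun ⟨hr, hA, hB⟩ => ⟨(h A hA B hB).mp hr, hA, hB⟩,
      fun ⟨hr, hA, hB⟩ => ⟨(h A hA B hB).mpr hr, hA, hB⟩⟩⟩

end Preferences

namespace sgeqv

variable {sem : Sem} {P Q : OptProblem U}

theorem mono {i i' : ℕ} {j j' : ℕ∞} (hi : i ≤ i') (hj : j' ≤ j) (h : sgeqv sem i j P Q) :
    sgeqv sem i' j' P Q :=
  fun R hR => h R fun r hr => ⟨hi.trans (hR r hr).1, (hR r hr).2.trans hj⟩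

theorem symm {i : ℕ} {j : ℕ∞} (h : sgeqv sem i j P Q) : sgeqv sem i j Q P :=
  fun R hR => (h R hR).symm

/-- Over `htContext I J` the only candidate outcome is `J`, so the preferred outcomes are just the
answer sets. -/
theorem AS_union_htContext_eq (h : sgeqv Sem.aso 1 1 P Q) (I J : Set U) :
    AS (P.gen ∪ htContext I J) = AS (Q.gen ∪ htContext I J) := by
  let R : OptProblem U := ⟨htContext I J, ∅, Set.finite_empty⟩
  have hsub : ∀ X : OptProblem U, (outcomes Sem.aso (X.union R)).Subsingleton :=
    fun X => Set.subsingleton_singleton.anti AS_union_htContext_subset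
  have := h R fun r hr => absurd hr (Set.notMem_empty r)
  rwa [pref_eq_outcomes_of_subsingleton (hsub P), pref_eq_outcomes_of_subsingleton (hsub Q)]
    at this

theorem HTmod_eq (h : sgeqv Sem.aso 1 1 P Q) : HTmod P.gen = HTmod Q.gen :=
  (HTmod_subset_of_AS_union_htContext fun I J _ => h.AS_union_htContext_eq I J).antisymm
    (HTmod_subset_of_AS_union_htContext fun I J _ => h.symm.AS_union_htContext_eq I J)

/-- Over a context with answer sets `{I, J}` and a rule preferring `I` to `J`, the outcome `J` is
rejected for `P` but survives for `Q` unless `I ≥^Q J`. -/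
theorem geSel_of_geSel (h : sgeqv Sem.aso 1 1 P Q) (hP : IsSimpleSel P.sel)
    (hQ : IsSimpleSel Q.sel) (hmod : models P.gen = models Q.gen) {I J : Set U}
    (hI : I ∈ models P.gen) (hJ : J ∈ models P.gen) (hge : geSel P.sel I J) :
    geSel Q.sel I J := by
  by_cases hIJ : I = J
  · exact hIJ ▸ .inl fun _ _ => rfl
  obtain ⟨T, hT⟩ := exists_AS_union_eq_pair hIJ
  obtain ⟨rs, hrs1, hlt⟩ := exists_rule_degree_lt hIJ
  have hrs : IsSimpleSel {rs} := fun r hr => hr ▸ hrs1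
  let R : OptProblem U := ⟨T, {rs}, Set.finite_singleton rs⟩
  have hASP : AS (P.gen ∪ T) = {I, J} := hT _ hI hJ
  have hASQ : AS (Q.gen ∪ T) = {I, J} :=
    hT _ (show I ∈ models Q.gen from hmod ▸ hI) (show J ∈ models Q.gen from hmod ▸ hJ)
  have hJP : J ∉ pref Sem.aso (P.union R) := by
    refine fun ⟨_, hmax⟩ => hmax ⟨I, show I ∈ AS (P.gen ∪ T) from hASP ▸ .inl rfl, ?_⟩
    refine (hP.union hrs).gtSel_iff.mpr ⟨paretoSel_union.mpr ⟨hP.geSel_iff.mp hge, ?_⟩, ?_⟩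
    · rintro r rfl
      exact hlt.le
    · exact fun hsim => hlt.ne (hsim rs (.inr rfl))
  by_contra hnge
  have hJQ : J ∈ pref Sem.aso (Q.union R) := by
    refine ⟨show J ∈ AS (Q.gen ∪ T) from hASQ ▸ .inr rfl, ?_⟩
    rintro ⟨L, hL, hgt⟩
    obtain rfl | rfl : L ∈ ({I, J} : Set (Set U)) := hASQ ▸ show L ∈ AS (Q.gen ∪ T) from hL
    · exact hnge (hQ.geSel_iff.mpr (paretoSel_union.mp ((hQ.union hrs).gtSel_iff.mp hgt).1).1)
    · exact gtSel_irrefl _ _ hgt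
  exact hJP (h R (fun r hr => hr ▸ ⟨hrs1.ge, by simp [hrs1]⟩) ▸ hJQ)

theorem restrictRel_geSel_eq (h : sgeqv Sem.aso 1 1 P Q) (hP : IsSimpleSel P.sel)
    (hQ : IsSimpleSel Q.sel) :
    restrictRel (geSel P.sel) (models P.gen) = restrictRel (geSel Q.sel) (models Q.gen) := by
  have hmod := models_eq_of_HTmod_eq h.HTmod_eq
  rw [← hmod, restrictRel_eq_iff]
  exact fun A hA B hB => ⟨h.geSel_of_geSel hP hQ hmod hA hB,
    h.symm.geSel_of_geSel hQ hP hmod.symm (hmod ▸ hA) (hmod ▸ hB)⟩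

end sgeqv

theorem sgeqv_of_HTmod_eq_of_restrictRel_eq {P Q : OptProblem U} {i : ℕ} {j : ℕ∞}
    (hP : IsSimpleSel P.sel) (hQ : IsSimpleSel Q.sel) (hHT : HTmod P.gen = HTmod Q.gen)
    (hge : restrictRel (geSel P.sel) (models P.gen) = restrictRel (geSel Q.sel) (models Q.gen)) :
    sgeqv Sem.aso i j P Q := by
  rw [← models_eq_of_HTmod_eq hHT, restrictRel_eq_iff] at hge
  intro R _
  refine pref_congr (AS_union_eq_of_HTmod_eq hHT R.gen) fun A hA B hB => ?_
  have hAP : A ∈ models P.gen := (satTheory_union.mp (AS_subset_models hA)).1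
  have hBP : B ∈ models P.gen := (satTheory_union.mp (AS_subset_models hB)).1
  exact hP.gtSel_union_congr hQ (hge A hAP B hBP) (hge B hBP A hAP)

theorem stmt15_general {U : Type} (P Q : OptProblem U)
    (hP : ∀ r ∈ P.sel, r.rank = 1) (hQ : ∀ r ∈ Q.sel, r.rank = 1) :
    (sgeqv Sem.aso 1 ⊤ P Q ↔ sgeqv Sem.aso 1 (1 : ℕ∞) P Q) ∧
    (sgeqv Sem.aso 1 ⊤ P Q ↔
      (HTmod P.gen = HTmod Q.gen ∧
       restrictRel (geSel P.sel) (models P.gen) =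
         restrictRel (geSel Q.sel) (models Q.gen))) := by
  have hab : sgeqv Sem.aso 1 ⊤ P Q → sgeqv Sem.aso 1 (1 : ℕ∞) P Q := sgeqv.mono le_rfl le_top
  have hbc (h : sgeqv Sem.aso 1 (1 : ℕ∞) P Q) :
      HTmod P.gen = HTmod Q.gen ∧
        restrictRel (geSel P.sel) (models P.gen) = restrictRel (geSel Q.sel) (models Q.gen) :=
    ⟨h.HTmod_eq, h.restrictRel_geSel_eq hP hQ⟩
  have hca (h : HTmod P.gen = HTmod Q.gen ∧
      restrictRel (geSel P.sel) (models P.gen) = restrictRel (geSel Q.sel) (models Q.gen)) :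
      sgeqv Sem.aso 1 ⊤ P Q :=
    sgeqv_of_HTmod_eq_of_restrictRel_eq hP hQ h.1 h.2
  exact ⟨⟨hab, hca ∘ hbc⟩, ⟨hbc ∘ hab, hca⟩⟩

/-- Corollary 14: for simple ASO problems, `P ≡^s_g Q`, `P ≡^{s,=1}_g Q`,
and `HT(P^g) = HT(Q^g) ∧ (≥^P)_{Mod(P^g)} = (≥^Q)_{Mod(Q^g)}` are equivalent. -/
theorem stmt15 {U : Type} [Countable U] (P Q : OptProblem U)
    (hP : ∀ r ∈ P.sel, r.rank = 1) (hQ : ∀ r ∈ Q.sel, r.rank = 1) :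
    (sgeqv Sem.aso 1 ⊤ P Q ↔ sgeqv Sem.aso 1 (1 : ℕ∞) P Q) ∧
    (sgeqv Sem.aso 1 ⊤ P Q ↔
      (HTmod P.gen = HTmod Q.gen ∧
       restrictRel (geSel P.sel) (models P.gen) =
         restrictRel (geSel Q.sel) (models Q.gen))) :=
  stmt15_general P Q hP hQ
end

section
/- Let P and Q be optimization problems and I, J interpretations. Then I >^{P∪Q} J (the strict preference induced by the selector P^s ∪ Q^s) holds if and only if one of the following conditions holds: (1) diff^P(I,J) < diff^Q(I,J) and I >^P J; (2) diff^P(I,J) > diff^Q(I,J) and I >^Q J; (3) diff^P(I,J) = diff^Q(I,J), I >^P J and I >^Q J. -/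
open scoped Classical

variable {U : Type}

section Stmt16Aux

variable {U : Type}

private lemma simSel_subset_aux {S T : Set (Rule U)} {I J : Set U} (h : S ⊆ T)
    (hT : simSel T I J) : simSel S I J := fun r hr => hT r (h hr)

private lemma below_sel_mono (P : OptProblem U) {k k' : ℕ} (h : k ≤ k') :
    (P.below k).sel ⊆ (P.below k').sel := fun r hr => ⟨hr.1, lt_of_lt_of_le hr.2 h⟩

private lemma zero_mem_simset (P : OptProblem U) (I J : Set U) :
    simSel (P.below 0).sel I J := fun r hr => absurd hr.2 (Nat.not_lt_zero _)

private lemma diff_eq_rank (P : OptProblem U) (I J : Set U) (r' : Rule U)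
    (hmem : r' ∈ P.sel) (hne : degree I r' ≠ degree J r')
    (hlow : ∀ r ∈ P.sel, r.rank < r'.rank → degree I r = degree J r) :
    diff P I J = (r'.rank : ℕ∞) := by
  have hnotall : ¬ ∀ k : ℕ, simSel (P.below k).sel I J := by
    intro hall
    exact hne (hall (r'.rank + 1) r' ⟨hmem, Nat.lt_succ_self _⟩)
  rw [diff, if_neg hnotall]
  have hub : ∀ k ∈ {k : ℕ | simSel (P.below k).sel I J}, k ≤ r'.rank := by
    intro k hk
    by_contra hgt
    push_neg at hgt
    exact hne (hk r' ⟨hmem, hgt⟩)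
  have hmemS : r'.rank ∈ {k : ℕ | simSel (P.below k).sel I J} := by
    intro r hr
    exact hlow r hr.1 hr.2
  have : sSup {k : ℕ | simSel (P.below k).sel I J} = r'.rank :=
    le_antisymm (csSup_le ⟨r'.rank, hmemS⟩ hub) (le_csSup ⟨r'.rank, hub⟩ hmemS)
  rw [this]

private lemma lt_diff_iff (P : OptProblem U) (I J : Set U) (m : ℕ) :
    (m : ℕ∞) < diff P I J ↔ simSel (P.below (m+1)).sel I J := by
  rw [diff]
  split_ifs with h
  · exact ⟨fun _ => h (m+1), fun _ => lt_top_iff_ne_top.mpr (WithTop.coe_ne_top)⟩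
  · rw [Nat.cast_lt]
    push_neg at h
    obtain ⟨k0, hk0⟩ := h
    have hbdd : BddAbove {k : ℕ | simSel (P.below k).sel I J} := by
      refine ⟨k0, fun k hk => ?_⟩
      by_contra hgt
      push_neg at hgt
      exact hk0 (simSel_subset_aux (below_sel_mono P (le_of_lt hgt)) hk)
    constructor
    · intro hm
      have hsup : sSup {k : ℕ | simSel (P.below k).sel I J} ∈
          {k : ℕ | simSel (P.below k).sel I J} :=
        Nat.sSup_mem ⟨0, zero_mem_simset P I J⟩ hbdd
      exact simSel_subset_aux (below_sel_mono P (Nat.succ_le_of_lt hm)) hsup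
    · intro hm
      exact Nat.lt_of_succ_le (le_csSup hbdd hm)

end Stmt16Aux

/-- Lemma, composition: characterization of `I >^{P∪Q} J`. -/
theorem stmt16 {U : Type} [Countable U] (P Q : OptProblem U) (I J : Set U) :
    gtSel (P.union Q).sel I J ↔
      ((diff P I J < diff Q I J ∧ gtSel P.sel I J) ∨
       (diff Q I J < diff P I J ∧ gtSel Q.sel I J) ∨
       (diff P I J = diff Q I J ∧ gtSel P.sel I J ∧ gtSel Q.sel I J)) := by
  constructor
  · rintro ⟨r', hmem, hlt, hle, hlow⟩
    have hPlow : ∀ r ∈ P.sel, r.rank < r'.rank → degree I r = degree J r :=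
      fun r hr h => hlow r (Or.inl hr) h
    have hQlow : ∀ r ∈ Q.sel, r.rank < r'.rank → degree I r = degree J r :=
      fun r hr h => hlow r (Or.inr hr) h
    by_cases hP : simSel (P.below (r'.rank + 1)).sel I J
    · have hr'Q : r' ∈ Q.sel := by
        rcases hmem with h | h
        · exact absurd (hP r' ⟨h, Nat.lt_succ_self _⟩) (ne_of_lt hlt)
        · exact h
      have hdQ : diff Q I J = (r'.rank : ℕ∞) :=
        diff_eq_rank Q I J r' hr'Q (ne_of_lt hlt) hQlow
      have hdP : (r'.rank : ℕ∞) < diff P I J := (lt_diff_iff P I J _).mpr hP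
      exact Or.inr (Or.inl ⟨by rw [hdQ]; exact hdP,
        ⟨r', hr'Q, hlt, fun r hr h => hle r (Or.inr hr) h, hQlow⟩⟩)
    · by_cases hQ : simSel (Q.below (r'.rank + 1)).sel I J
      · have hr'P : r' ∈ P.sel := by
          rcases hmem with h | h
          · exact h
          · exact absurd (hQ r' ⟨h, Nat.lt_succ_self _⟩) (ne_of_lt hlt)
        have hdP : diff P I J = (r'.rank : ℕ∞) :=
          diff_eq_rank P I J r' hr'P (ne_of_lt hlt) hPlow
        have hdQ : (r'.rank : ℕ∞) < diff Q I J := (lt_diff_iff Q I J _).mpr hQ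
        exact Or.inl ⟨by rw [hdP]; exact hdQ,
          ⟨r', hr'P, hlt, fun r hr h => hle r (Or.inl hr) h, hPlow⟩⟩
      · unfold simSel at hP hQ
        push_neg at hP hQ
        obtain ⟨rP, hrP, hneP⟩ := hP
        obtain ⟨rQ, hrQ, hneQ⟩ := hQ
        have hrPrank : rP.rank = r'.rank := by
          rcases lt_or_eq_of_le (Nat.lt_succ_iff.mp hrP.2) with h | h
          · exact absurd (hPlow rP hrP.1 h) hneP
          · exact h
        have hrQrank : rQ.rank = r'.rank := by
          rcases lt_or_eq_of_le (Nat.lt_succ_iff.mp hrQ.2) with h | h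
          · exact absurd (hQlow rQ hrQ.1 h) hneQ
          · exact h
        have hltP : degree I rP < degree J rP :=
          lt_of_le_of_ne (hle rP (Or.inl hrP.1) hrPrank) hneP
        have hltQ : degree I rQ < degree J rQ :=
          lt_of_le_of_ne (hle rQ (Or.inr hrQ.1) hrQrank) hneQ
        have hgP : gtSel P.sel I J :=
          ⟨rP, hrP.1, hltP, fun r hr h => hle r (Or.inl hr) (h.trans hrPrank),
            fun r hr h => hPlow r hr (hrPrank ▸ h)⟩
        have hgQ : gtSel Q.sel I J :=
          ⟨rQ, hrQ.1, hltQ, fun r hr h => hle r (Or.inr hr) (h.trans hrQrank),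
            fun r hr h => hQlow r hr (hrQrank ▸ h)⟩
        have hdP : diff P I J = (rP.rank : ℕ∞) :=
          diff_eq_rank P I J rP hrP.1 hneP
            (fun r hr h => hPlow r hr (lt_of_lt_of_le h (le_of_eq hrPrank)))
        have hdQ : diff Q I J = (rQ.rank : ℕ∞) :=
          diff_eq_rank Q I J rQ hrQ.1 hneQ
            (fun r hr h => hQlow r hr (lt_of_lt_of_le h (le_of_eq hrQrank)))
        refine Or.inr (Or.inr ⟨?_, hgP, hgQ⟩)
        rw [hdP, hdQ, hrPrank, hrQrank]
  · rintro (⟨hd, rP, hPm, hPlt, hPle, hPlow⟩ | ⟨hd, rQ, hQm, hQlt, hQle, hQlow⟩ |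
      ⟨hd, ⟨rP, hPm, hPlt, hPle, hPlow⟩, ⟨rQ, hQm, hQlt, hQle, hQlow⟩⟩)
    · have hdP : diff P I J = (rP.rank : ℕ∞) :=
        diff_eq_rank P I J rP hPm (ne_of_lt hPlt) hPlow
      rw [hdP] at hd
      have hQsim : simSel (Q.below (rP.rank + 1)).sel I J := (lt_diff_iff Q I J _).mp hd
      refine ⟨rP, Or.inl hPm, hPlt, ?_, ?_⟩
      · rintro r (hr | hr) h
        · exact hPle r hr h
        · exact le_of_eq (hQsim r ⟨hr, by rw [h]; exact Nat.lt_succ_self _⟩)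
      · rintro r (hr | hr) h
        · exact hPlow r hr h
        · exact hQsim r ⟨hr, h.trans (Nat.lt_succ_self _)⟩
    · have hdQ : diff Q I J = (rQ.rank : ℕ∞) :=
        diff_eq_rank Q I J rQ hQm (ne_of_lt hQlt) hQlow
      rw [hdQ] at hd
      have hPsim : simSel (P.below (rQ.rank + 1)).sel I J := (lt_diff_iff P I J _).mp hd
      refine ⟨rQ, Or.inr hQm, hQlt, ?_, ?_⟩
      · rintro r (hr | hr) h
        · exact le_of_eq (hPsim r ⟨hr, by rw [h]; exact Nat.lt_succ_self _⟩)
        · exact hQle r hr h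
      · rintro r (hr | hr) h
        · exact hPsim r ⟨hr, h.trans (Nat.lt_succ_self _)⟩
        · exact hQlow r hr h
    · have hdP : diff P I J = (rP.rank : ℕ∞) :=
        diff_eq_rank P I J rP hPm (ne_of_lt hPlt) hPlow
      have hdQ : diff Q I J = (rQ.rank : ℕ∞) :=
        diff_eq_rank Q I J rQ hQm (ne_of_lt hQlt) hQlow
      rw [hdP, hdQ, Nat.cast_inj] at hd
      refine ⟨rP, Or.inl hPm, hPlt, ?_, ?_⟩
      · rintro r (hr | hr) h
        · exact hPle r hr h
        · exact hQle r hr (h.trans hd)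
      · rintro r (hr | hr) h
        · exact hPlow r hr h
        · exact hQlow r hr (hd ▸ h)
end

section
/- For every optimization problem P (interpreted as a CO problem or as an ASO problem) and every i ≥ 1, π(P) ⊆ π(P_{<i}). -/
open scoped Classical

variable {U : Type}

/-- Lemma: `π(P) ⊆ π(P_{<i})` for every `i ≥ 1`. -/
theorem stmt17 {U : Type} [Countable U] (sem : Sem) (P : OptProblem U)
    (i : ℕ) (hi : 1 ≤ i) :
    pref sem P ⊆ pref sem (P.below i) := by
  intro I hI
  obtain ⟨hO, hN⟩ := hI
  have hout : outcomes sem (P.below i) = outcomes sem P := by cases sem <;> rfl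
  refine ⟨hout ▸ hO, ?_⟩
  rintro ⟨J, hJ, r', ⟨hr'P, hr'lt⟩, hlt, hsame, hbelow⟩
  exact hN ⟨J, hout ▸ hJ, r', hr'P, hlt,
    fun r hr heq => hsame r ⟨hr, heq ▸ hr'lt⟩ heq,
    fun r hr hlt' => hbelow r ⟨hr, hlt'.trans hr'lt⟩ hlt'⟩
end
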